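/- arXiv:2102.10299 — 2 statements merged into one kernel-verified Lean document; each statement's English description precedes it below -/
import Mathlib

section
/- If I is a quasi J-ideal of a commutative ring R and S is a subset of R with S ⊄ J(R), then (I : S) is a quasi J-ideal of R. -/
def IsQuasiJIdeal {R : Type*} [CommRing R] (I : Ideal R) : Prop :=
  I ≠ ⊤ ∧ ∀ a b : R, a * b ∈ I → a ∉ Ideal.jacobson (⊥ : Ideal R) → b ∈ I.radical

def setColon {R : Type*} [CommRing R] (I : Ideal R) (S : Set R) : Ideal R where
  carrier := {r : R | ∀ s ∈ S, r * s ∈ I}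
  zero_mem' := by intro s hs; simp
  add_mem' := by
    intro a b ha hb s hs
    have := I.add_mem (ha s hs) (hb s hs)
    simpa [add_mul] using this
  smul_mem' := by
    intro c a ha s hs
    have := I.mul_mem_left c (ha s hs)
    simpa [mul_assoc] using this

/-!
Pick `s ∈ S` outside `J(R)`. Every `r ∈ (I : S)` has `s * r ∈ I`, so `(I : S) ⊆ √I`; as also
`I ⊆ (I : S)`, both ideals have radical `√I`. Properness follows, and `ab ∈ (I : S)` with
`a ∉ J(R)` gives `ab ∈ √I`, hence `aⁿbⁿ ∈ I` with `aⁿ ∉ J(R)` (the Jacobson radical is a radical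
ideal), so `b ∈ √I ⊆ √(I : S)`.
-/

section

variable {R : Type*} [CommRing R]

lemma le_setColon (I : Ideal R) (S : Set R) : I ≤ setColon I S :=
  fun _ hr s _ => I.mul_mem_right s hr

namespace IsQuasiJIdeal

variable {I : Ideal R}

lemma mem_radical_of_mul_mem_radical (hI : IsQuasiJIdeal I) {a b : R}
    (hab : a * b ∈ I.radical) (ha : a ∉ Ideal.jacobson (⊥ : Ideal R)) : b ∈ I.radical := by
  obtain ⟨n, hn⟩ := hab
  have han : a ^ n ∉ Ideal.jacobson (⊥ : Ideal R) :=
    fun h => ha ((⊥ : Ideal R).isRadical_jacobson ⟨n, h⟩)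
  obtain ⟨m, hm⟩ := hI.2 (a ^ n) (b ^ n) (mul_pow a b n ▸ hn) han
  exact ⟨n * m, pow_mul b n m ▸ hm⟩

lemma setColon_le_radical (hI : IsQuasiJIdeal I) {S : Set R} {s : R} (hsS : s ∈ S)
    (hs : s ∉ Ideal.jacobson (⊥ : Ideal R)) : setColon I S ≤ I.radical :=
  fun r hr => hI.2 s r (mul_comm r s ▸ hr s hsS) hs

end IsQuasiJIdeal

end

theorem stmt11 {R : Type*} [CommRing R] (I : Ideal R) (S : Set R)
    (hS : ¬ S ⊆ (Ideal.jacobson (⊥ : Ideal R) : Set R))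
    (hI : IsQuasiJIdeal I) :
    IsQuasiJIdeal (setColon I S) := by
  obtain ⟨s, hsS, hs⟩ := Set.not_subset.mp hS
  have hle := hI.setColon_le_radical hsS hs
  refine ⟨fun htop => hI.1 (Ideal.radical_eq_top.mp (top_le_iff.mp (htop ▸ hle))), ?_⟩
  intro a b hab ha
  exact Ideal.radical_mono (le_setColon I S) (hI.mem_radical_of_mul_mem_radical (hle hab) ha)
end

section
/- Let I be a proper ideal of a commutative ring R. Then I is a quasi J-ideal of R if and only if I ⊆ J(R) and the quotient ring R/I is quasi presimplifiable. -/
def QuasiPresimplifiable (R : Type*) [CommRing R] : Prop :=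
  ∀ a b : R, a = a * b → a ∈ nilradical R ∨ IsUnit b

/-!
A quasi J-ideal lies in `J(R)`: since `x * 1 ∈ I`, an `x ∈ I \ J(R)` would put `1` in `√I`.
A relation `b̄ = b̄ c̄` in `R ⧸ I` says `b (1 - c) ∈ I`; for a quasi J-ideal either `1 - c ∈ J(R)`,
making `c` a unit, or `b ∈ √I`. Conversely, `a ∉ J(R)` gives an `r` with `1 + a r` not a unit, and
`a b ∈ I` gives `b̄ = b̄ (1 + a r)‾`; as `I ⊆ J(R)`, the map `R → R ⧸ I` reflects units, so `b ∈ √I`.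
-/

namespace Ideal

variable {R : Type*} [CommRing R] {I : Ideal R}

theorem Quotient.mk_mem_nilradical_iff {x : R} :
    Quotient.mk I x ∈ nilradical (R ⧸ I) ↔ x ∈ I.radical := by
  rw [nilradical, ← mem_comap, comap_radical, zero_eq_bot, ← RingHom.ker_eq_comap_bot, mk_ker]

theorem quotient_mk_eq_mul_iff {x y : R} :
    Quotient.mk I x = Quotient.mk I x * Quotient.mk I y ↔ x * (1 - y) ∈ I := by
  rw [← map_mul, Quotient.eq, mul_sub, mul_one]

theorem quasiPresimplifiable_quotient_iff :
    QuasiPresimplifiable (R ⧸ I) ↔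
      ∀ x y : R, x * (1 - y) ∈ I → x ∈ I.radical ∨ IsUnit (Quotient.mk I y) := by
  simp only [QuasiPresimplifiable, Quotient.mk_surjective.forall, quotient_mk_eq_mul_iff,
    Quotient.mk_mem_nilradical_iff]

theorem isUnit_of_one_sub_mem_jacobson_bot {y : R} (h : 1 - y ∈ jacobson (⊥ : Ideal R)) :
    IsUnit y :=
  isUnit_of_sub_one_mem_jacobson_bot y (by simpa using neg_mem h)

end Ideal

section

open Ideal

variable {R : Type*} [CommRing R] {I : Ideal R}

theorem IsQuasiJIdeal.le_jacobson_bot (hI : IsQuasiJIdeal I) : I ≤ jacobson (⊥ : Ideal R) := by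
  intro x hx
  by_contra hxJ
  have h1 : (1 : R) ∈ I.radical := hI.2 x 1 (by simpa using hx) hxJ
  exact hI.1 (radical_eq_top.mp ((eq_top_iff_one _).mpr h1))

theorem IsQuasiJIdeal.quasiPresimplifiable_quotient (hI : IsQuasiJIdeal I) :
    QuasiPresimplifiable (R ⧸ I) := by
  refine quasiPresimplifiable_quotient_iff.mpr fun x y hxy => ?_
  by_cases hJ : 1 - y ∈ jacobson (⊥ : Ideal R)
  · exact .inr ((isUnit_of_one_sub_mem_jacobson_bot hJ).map _)
  · exact .inl (hI.2 (1 - y) x (by rwa [mul_comm]) hJ)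

theorem isQuasiJIdeal_of_le_jacobson_bot (hI : I ≠ ⊤) (hIJ : I ≤ jacobson (⊥ : Ideal R))
    (hQ : QuasiPresimplifiable (R ⧸ I)) : IsQuasiJIdeal I := by
  refine ⟨hI, fun a b hab haJ => ?_⟩
  obtain ⟨r, hr⟩ : ∃ r, ¬IsUnit (a * r + 1) := by simpa [mem_jacobson_bot] using haJ
  have hb : b * (1 - (a * r + 1)) ∈ I := by
    rw [show b * (1 - (a * r + 1)) = -(a * b * r) by ring]
    exact neg_mem (I.mul_mem_right r hab)
  have : IsLocalHom (Ideal.Quotient.mk I) := isLocalHom_of_le_jacobson_bot I hIJ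
  exact (quasiPresimplifiable_quotient_iff.mp hQ b _ hb).resolve_right (mt (IsUnit.of_map _ _) hr)

end

theorem stmt19 {R : Type*} [CommRing R] (I : Ideal R) (hI : I ≠ ⊤) :
    IsQuasiJIdeal I ↔
      I ≤ Ideal.jacobson (⊥ : Ideal R) ∧ QuasiPresimplifiable (R ⧸ I) :=
  ⟨fun h => ⟨h.le_jacobson_bot, h.quasiPresimplifiable_quotient⟩,
    fun ⟨hIJ, hQ⟩ => isQuasiJIdeal_of_le_jacobson_bot hI hIJ hQ⟩
end
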